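/- arXiv:2310.08894 — 2 statements merged into one kernel-verified Lean document; each statement's English description precedes it below -/
import Mathlib

section
/- Define the F × K array C with F = K, entries star exactly at positions C[j][k] = star for j ∈ [⟨(k-1)t+1⟩_K, ⟨kt⟩_K] (a cyclic interval of length t). If rt < K, then C is a (K, K, t, r) caching array: each column has exactly t stars, and any two columns at cyclic distance less than r have disjoint star supports. -/
/-!
Column `k` is the image of `i ↦ ⟨(k-1)t + 1 + i⟩_K` on `0 ≤ i < t`, which is injective because
`t ≤ rt < K`, so it has exactly `t` stars. A common star of columns `k₁, k₂` would give
`K ∣ d t + (i₁ - i₂)` with `d = ⟨k₁ - k₂⟩_K` and `0 ≤ i₁, i₂ < t`; if `d < r` this number lies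
strictly between `0` and `rt < K`, which is impossible.
-/

/-- The representative of `a` mod `K` in `{1, ..., K}`. -/
def cyc (K : ℕ) (a : ℤ) : ℤ := (a - 1) % (K : ℤ) + 1

/-- `C[j][k] = star` iff `j` lies in the cyclic interval
`[⟨(k-1)t+1⟩_K, ⟨kt⟩_K]` of length `t`. -/
def star5 (K t : ℕ) (j k : ℤ) : Prop :=
  ∃ i : ℕ, i < t ∧ j = cyc K ((k - 1) * t + 1 + i)

lemma cyc_mem_Icc {K : ℕ} (hK : 0 < K) (a : ℤ) : cyc K a ∈ Set.Icc (1 : ℤ) K := by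
  have h₀ := Int.emod_nonneg (a - 1) (by exact_mod_cast hK.ne' : (K : ℤ) ≠ 0)
  have h₁ := Int.emod_lt_of_pos (a - 1) (by exact_mod_cast hK : (0 : ℤ) < K)
  exact ⟨by unfold cyc; omega, by unfold cyc; omega⟩

lemma cyc_modEq (K : ℕ) (a : ℤ) : cyc K a ≡ a [ZMOD K] := by
  simpa [cyc] using (Int.mod_modEq (a - 1) K).add_right 1

lemma modEq_of_cyc_eq {K : ℕ} {a b : ℤ} (h : cyc K a = cyc K b) : a ≡ b [ZMOD K] :=
  (cyc_modEq K a).symm.trans (h ▸ cyc_modEq K b)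

lemma cyc_add_injOn (K : ℕ) (c : ℤ) :
    Set.InjOn (fun i : ℕ => cyc K (c + i)) (Finset.range K) := by
  intro i hi j hj hij
  have h : (i : ℤ) ≡ j [ZMOD K] := (modEq_of_cyc_eq hij).add_left_cancel' c
  exact (Int.natCast_modEq_iff.1 h).eq_of_lt_of_lt (Finset.mem_range.1 hi) (Finset.mem_range.1 hj)

lemma setOf_star5_eq_image {K : ℕ} (hK : 0 < K) (t : ℕ) (k : ℤ) :
    {j ∈ Set.Icc (1 : ℤ) K | star5 K t j k}
      = (fun i : ℕ => cyc K ((k - 1) * t + 1 + i)) '' (Finset.range t) := by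
  ext j
  simp only [star5, Set.mem_sep_iff, Set.mem_image, Finset.coe_range, Set.mem_Iio]
  constructor
  · rintro ⟨-, i, hi, rfl⟩
    exact ⟨i, hi, rfl⟩
  · rintro ⟨i, hi, rfl⟩
    exact ⟨cyc_mem_Icc hK _, i, hi, rfl⟩

lemma ncard_setOf_star5 {K t : ℕ} (hK : 0 < K) (htK : t ≤ K) (k : ℤ) :
    {j ∈ Set.Icc (1 : ℤ) K | star5 K t j k}.ncard = t := by
  have hinj := (cyc_add_injOn K ((k - 1) * t + 1)).mono
    (Finset.coe_subset.2 (Finset.range_subset_range.2 htK))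
  rw [setOf_star5_eq_image hK, hinj.ncard_image, Set.ncard_coe_finset, Finset.card_range]

lemma not_star5_and_star5 {K t r : ℕ} (h : r * t < K) {k₁ k₂ : ℤ} (hd : cyc K (k₁ - k₂) < r)
    (j : ℤ) : ¬(star5 K t j k₁ ∧ star5 K t j k₂) := by
  rintro ⟨⟨i₁, hi₁, rfl⟩, i₂, hi₂, hj⟩
  set d := cyc K (k₁ - k₂)
  have hd₁ : 1 ≤ d := (cyc_mem_Icc (by omega) _).1
  have hdvd : (K : ℤ) ∣ d * t + (i₁ - i₂) := by
    refine Int.modEq_zero_iff_dvd.1 ?_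
    calc d * t + (i₁ - i₂) ≡ (k₁ - k₂) * t + (i₁ - i₂) [ZMOD K] :=
          ((cyc_modEq K _).mul_right _).add_right _
      _ = ((k₁ - 1) * t + 1 + i₁) - ((k₂ - 1) * t + 1 + i₂) := by ring
      _ ≡ ((k₂ - 1) * t + 1 + i₂) - ((k₂ - 1) * t + 1 + i₂) [ZMOD K] :=
          (modEq_of_cyc_eq hj).sub_right _
      _ = 0 := sub_self _
  have hrt : (r : ℤ) * t < K := by exact_mod_cast h
  have hlt : d * t + (i₁ - i₂) < K := by nlinarith
  have hzero := Int.eq_zero_of_dvd_of_nonneg_of_lt (by nlinarith) hlt hdvd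
  nlinarith

theorem stmt5_general (K t r : ℕ) (hr : 0 < r) (h : r * t < K) :
    -- each column has exactly t stars
    (∀ k ∈ Set.Icc (1 : ℤ) K,
      {j ∈ Set.Icc (1 : ℤ) K | star5 K t j k}.ncard = t) ∧
    -- columns at cyclic distance less than r have disjoint star supports
    (∀ k₁ ∈ Set.Icc (1 : ℤ) K, ∀ k₂ ∈ Set.Icc (1 : ℤ) K, k₁ ≠ k₂ →
      (cyc K (k₁ - k₂) < r ∨ cyc K (k₂ - k₁) < r) →
      ∀ j, ¬(star5 K t j k₁ ∧ star5 K t j k₂)) := by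
  have hK : 0 < K := by omega
  have htK : t ≤ K := (Nat.le_mul_of_pos_left t hr).trans h.le
  refine ⟨fun k _ => ncard_setOf_star5 hK htK k, fun k₁ _ k₂ _ _ hdist j => ?_⟩
  rcases hdist with hd | hd
  · exact not_star5_and_star5 h hd j
  · exact fun hj => not_star5_and_star5 h hd j hj.symm

theorem stmt5 (K t r : ℕ) (hK : 0 < K) (ht : 0 < t) (hr : 0 < r) (h : r * t < K) :
    -- each column has exactly t stars
    (∀ k ∈ Set.Icc (1 : ℤ) K,
      {j ∈ Set.Icc (1 : ℤ) K | star5 K t j k}.ncard = t) ∧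
    -- columns at cyclic distance less than r have disjoint star supports
    (∀ k₁ ∈ Set.Icc (1 : ℤ) K, ∀ k₂ ∈ Set.Icc (1 : ℤ) K, k₁ ≠ k₂ →
      (cyc K (k₁ - k₂) < r ∨ cyc K (k₂ - k₁) < r) →
      ∀ j, ¬(star5 K t j k₁ ∧ star5 K t j k₂)) :=
  stmt5_general K t r hr h
end

section
/- Consider the K × K array D' with stars in column k exactly at rows in the cyclic interval [k, ⟨k+rt-1⟩_K], and with integer entries assigned for each s ∈ [(m-1)K], writing s = pK + q with p ∈ [0, m-2], q ∈ [K]: if p is even, D'[q][⟨(p/2)(rt+L)+q+i⟩_K] = s for i ∈ [L] and D'[⟨(p/2)(rt+L)+rt+q⟩_K][⟨q-rt+i⟩_K] = s for i ∈ [rt]; if p is odd, D'[q][⟨((p-1)/2)(rt+L)+L+q+i⟩_K] = s for i ∈ [rt] and D'[⟨((p+1)/2)(rt+L)+q⟩_K][⟨q-rt+i⟩_K] = s for i ∈ [L]. Assuming K = m·rt + (m-1)L with L ≥ rt and m ≥ 2, each integer s appears exactly rt + L times in D'. -/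
/-- Cell `(j,k)` of `D'` carries the integer `s ∈ [(m-1)K]`, where
`s = pK + q` with `p ∈ [0, m-2]`, `q ∈ [K]`, following the integer
assignment of Construction III. -/
def pos13 (K r t L m : ℕ) (s j k : ℤ) : Prop :=
  ∃ p q : ℤ, s = p * K + q ∧ 0 ≤ p ∧ p ≤ (m : ℤ) - 2 ∧ 1 ≤ q ∧ q ≤ K ∧
    ((Even p ∧
      ((j = q ∧ ∃ i : ℤ, 1 ≤ i ∧ i ≤ L ∧
          k = cyc K (p / 2 * ((r : ℤ) * t + L) + q + i)) ∨
       (j = cyc K (p / 2 * ((r : ℤ) * t + L) + (r : ℤ) * t + q) ∧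
        ∃ i : ℤ, 1 ≤ i ∧ i ≤ (r : ℤ) * t ∧ k = cyc K (q - (r : ℤ) * t + i)))) ∨
     (¬ Even p ∧
      ((j = q ∧ ∃ i : ℤ, 1 ≤ i ∧ i ≤ (r : ℤ) * t ∧
          k = cyc K ((p - 1) / 2 * ((r : ℤ) * t + L) + L + q + i)) ∨
       (j = cyc K ((p + 1) / 2 * ((r : ℤ) * t + L) + q) ∧
        ∃ i : ℤ, 1 ≤ i ∧ i ≤ L ∧ k = cyc K (q - (r : ℤ) * t + i)))))

/-!
For fixed `s` the decomposition `s = pK + q` with `q ∈ [K]` is unique, so the cells carrying `s`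
form two runs of cyclically consecutive columns, of lengths `L` and `rt` in some order, one in
row `q` and one in row `⟨q + d⟩_K` with `0 < d < K`. A run shorter than `K` meets no column
twice, and the two runs lie in different rows, so together they have `rt + L` cells.
-/

section cyc

variable {K : ℕ}

theorem cyc_eq_cyc_iff {a b : ℤ} : cyc K a = cyc K b ↔ a ≡ b [ZMOD K] := by
  unfold cyc
  rw [add_left_inj]
  exact ⟨fun h => by simpa using Int.ModEq.add_right 1 (h : a - 1 ≡ b - 1 [ZMOD K]),
    fun h => h.sub_right 1⟩

theorem cyc_eq_self {a : ℤ} (h1 : 1 ≤ a) (h2 : a ≤ K) : cyc K a = a := by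
  unfold cyc
  rw [Int.emod_eq_of_lt (by omega) (by omega), sub_add_cancel]

theorem one_le_cyc (hK : 0 < K) (a : ℤ) : 1 ≤ cyc K a := by
  have := Int.emod_nonneg (a - 1) (by omega : (K : ℤ) ≠ 0)
  unfold cyc
  omega

theorem cyc_le (hK : 0 < K) (a : ℤ) : cyc K a ≤ K := by
  have := Int.emod_lt_of_pos (a - 1) (by omega : (0 : ℤ) < K)
  unfold cyc
  omega

theorem ediv_mul_add_cyc (s : ℤ) : (s - 1) / K * K + cyc K s = s := by
  have := Int.ediv_mul_add_emod (s - 1) K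
  unfold cyc
  omega

theorem eq_ediv_and_cyc_of_mul_add_eq (hK : 0 < K) {p q s : ℤ} (h : p * K + q = s) (hq1 : 1 ≤ q)
    (hqK : q ≤ K) : p = (s - 1) / K ∧ q = cyc K s := by
  have := (Int.ediv_emod_unique (a := s - 1) (r := q - 1) (q := p) (by omega : (0 : ℤ) < K)).2
    ⟨by linarith, by omega, by omega⟩
  unfold cyc
  omega

theorem cyc_add_ne_self {d q : ℤ} (hq1 : 1 ≤ q) (hqK : q ≤ K) (hd0 : 0 < d) (hdK : d < K) :
    cyc K (d + q) ≠ q := by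
  intro h
  have h' : cyc K (d + q) = cyc K (0 + q) := by rwa [zero_add, cyc_eq_self hq1 hqK]
  have := (Int.ModEq.add_right_cancel' q (cyc_eq_cyc_iff.1 h')).eq
  rw [Int.emod_eq_of_lt hd0.le hdK, Int.zero_emod] at this
  omega

theorem injOn_cyc_add {N : ℕ} (hN : N ≤ K) (c : ℤ) :
    Set.InjOn (fun i => cyc K (c + i)) (Set.Icc 1 N) := by
  intro i hi i' hi' h
  have hdvd := (Int.ModEq.add_left_cancel' c (cyc_eq_cyc_iff.1 h)).symm.dvd
  have := Int.eq_zero_of_abs_lt_dvd hdvd (by rw [abs_lt]; simp only [Set.mem_Icc] at hi hi'; omega)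
  omega

end cyc

def rowSegment (K : ℕ) (j c : ℤ) (N : ℕ) : Set (ℤ × ℤ) :=
  (fun i => (j, cyc K (c + i))) '' Set.Icc 1 N

section rowSegment

variable {K N N' : ℕ} {j j' c c' : ℤ}

@[simp]
theorem mem_rowSegment {x : ℤ × ℤ} :
    x ∈ rowSegment K j c N ↔ x.1 = j ∧ ∃ i : ℤ, 1 ≤ i ∧ i ≤ N ∧ x.2 = cyc K (c + i) := by
  obtain ⟨a, b⟩ := x
  simp only [rowSegment, Set.mem_image, Set.mem_Icc, Prod.mk.injEq]
  constructor
  · rintro ⟨i, ⟨h1, h2⟩, rfl, rfl⟩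
    exact ⟨rfl, i, h1, h2, rfl⟩
  · rintro ⟨rfl, i, h1, h2, rfl⟩
    exact ⟨i, ⟨h1, h2⟩, rfl, rfl⟩

theorem finite_rowSegment : (rowSegment K j c N).Finite :=
  (Set.finite_Icc _ _).image _

theorem ncard_rowSegment (hN : N ≤ K) : (rowSegment K j c N).ncard = N := by
  have hinj : Set.InjOn (fun i => (j, cyc K (c + i))) (Set.Icc 1 N) :=
    fun i hi i' hi' h => injOn_cyc_add hN c hi hi' (congrArg Prod.snd h)
  rw [rowSegment, hinj.ncard_image, ← Finset.coe_Icc, Set.ncard_coe_finset, Int.card_Icc]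
  simp

theorem ncard_union_rowSegment (hj : j ≠ j') (hN : N ≤ K) (hN' : N' ≤ K) :
    (rowSegment K j c N ∪ rowSegment K j' c' N').ncard = N + N' := by
  have hdisj : Disjoint (rowSegment K j c N) (rowSegment K j' c' N') :=
    Set.disjoint_left.2 fun _ hx hx' =>
      hj ((mem_rowSegment.1 hx).1.symm.trans (mem_rowSegment.1 hx').1)
  rw [Set.ncard_union_eq hdisj finite_rowSegment finite_rowSegment, ncard_rowSegment hN,
    ncard_rowSegment hN']

end rowSegment

theorem setOf_pos13_eq {K r t L m : ℕ} {s p q : ℤ} (hK : 0 < K) (hs : p * K + q = s)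
    (hq1 : 1 ≤ q) (hqK : q ≤ K) (hp0 : 0 ≤ p) (hpm : p ≤ m - 2) :
    {jk : ℤ × ℤ | pos13 K r t L m s jk.1 jk.2} =
      if Even p then
        rowSegment K q (p / 2 * ((r : ℤ) * t + L) + q) L ∪
          rowSegment K (cyc K (p / 2 * ((r : ℤ) * t + L) + (r : ℤ) * t + q)) (q - (r : ℤ) * t)
            (r * t)
      else
        rowSegment K q ((p - 1) / 2 * ((r : ℤ) * t + L) + L + q) (r * t) ∪
          rowSegment K (cyc K ((p + 1) / 2 * ((r : ℤ) * t + L) + q)) (q - (r : ℤ) * t) L := by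
  ext x
  simp only [Set.mem_ofPred_eq, pos13]
  constructor
  · rintro ⟨p', q', hs', -, -, hq1', hqK', h⟩
    obtain ⟨rfl, rfl⟩ : p' = p ∧ q' = q := by
      have := eq_ediv_and_cyc_of_mul_add_eq hK hs'.symm hq1' hqK'
      have := eq_ediv_and_cyc_of_mul_add_eq hK hs hq1 hqK
      omega
    split_ifs with hp <;> simpa [hp] using h
  · intro h
    refine ⟨p, q, hs.symm, hp0, hpm, hq1, hqK, ?_⟩
    split_ifs at h with hp <;> simpa [hp] using h

section shift

variable {m R L p : ℤ}

theorem div_two_mul_add_mem_Ioo (hR : 0 < R) (hL : 0 ≤ L) (hp0 : 0 ≤ p) (hpm : p ≤ m - 2) :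
    p / 2 * (R + L) + R ∈ Set.Ioo 0 (m * R + (m - 1) * L) := by
  have he : 0 ≤ p / 2 := by omega
  have hme : 0 ≤ m - 2 - 2 * (p / 2) := by omega
  constructor <;>
    nlinarith [mul_nonneg he (add_nonneg hR.le hL), mul_nonneg hme (add_nonneg hR.le hL)]

theorem add_one_div_two_mul_mem_Ioo (hR : 0 < R) (hL : 0 ≤ L) (hp : Odd p) (hp0 : 0 ≤ p)
    (hpm : p ≤ m - 2) : (p + 1) / 2 * (R + L) ∈ Set.Ioo 0 (m * R + (m - 1) * L) := by
  obtain ⟨e, rfl⟩ := hp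
  have he : (2 * e + 1 + 1) / 2 = e + 1 := by omega
  rw [he]
  constructor <;> nlinarith [mul_nonneg (by omega : 0 ≤ e) (add_nonneg hR.le hL)]

end shift

theorem stmt13_general (K r t L m : ℕ) (hr : 0 < r) (ht : 0 < t) (hm : 2 ≤ m)
    (hK : K = m * (r * t) + (m - 1) * L) :
    ∀ s : ℤ, 1 ≤ s → s ≤ ((m : ℤ) - 1) * K →
      {jk : ℤ × ℤ | pos13 K r t L m s jk.1 jk.2}.ncard = r * t + L := by
  intro s hs1 hs2
  have hrt : 0 < r * t := Nat.mul_pos hr ht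
  have hKge : 2 * (r * t) + L ≤ m * (r * t) + (m - 1) * L :=
    Nat.add_le_add (Nat.mul_le_mul_right _ hm) (Nat.le_mul_of_pos_left _ (by omega))
  have hK0 : 0 < K := by omega
  have hKZ : (K : ℤ) = m * ((r : ℤ) * t) + (m - 1) * L := by
    rw [hK]; push_cast [Nat.cast_sub (by omega : 1 ≤ m)]; ring
  have hrtZ : (0 : ℤ) < r * t := by exact_mod_cast hrt
  set p := (s - 1) / K
  have hp0 : 0 ≤ p := Int.ediv_nonneg (by omega) (by omega)
  have hpm : p ≤ m - 2 := by
    have := (Int.ediv_lt_iff_lt_mul (by omega : (0 : ℤ) < K)).2 (by linarith : s - 1 < (m - 1) * K)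
    omega
  rw [setOf_pos13_eq hK0 (ediv_mul_add_cyc s) (one_le_cyc hK0 s) (cyc_le hK0 s) hp0 hpm]
  split_ifs with hp
  · rw [ncard_union_rowSegment ?_ (by omega) (by omega), add_comm]
    obtain ⟨h0, hlt⟩ := div_two_mul_add_mem_Ioo hrtZ (Int.natCast_nonneg L) hp0 hpm
    exact (cyc_add_ne_self (one_le_cyc hK0 s) (cyc_le hK0 s) h0 (hlt.trans_eq hKZ.symm)).symm
  · rw [ncard_union_rowSegment ?_ (by omega) (by omega)]
    obtain ⟨h0, hlt⟩ := add_one_div_two_mul_mem_Ioo hrtZ (Int.natCast_nonneg L)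
      (Int.not_even_iff_odd.1 hp) hp0 hpm
    exact (cyc_add_ne_self (one_le_cyc hK0 s) (cyc_le hK0 s) h0 (hlt.trans_eq hKZ.symm)).symm

theorem stmt13 (K r t L m : ℕ) (hr : 0 < r) (ht : 0 < t) (hL : 0 < L)
    (hm : 2 ≤ m) (hLrt : r * t ≤ L) (hK : K = m * (r * t) + (m - 1) * L) :
    ∀ s : ℤ, 1 ≤ s → s ≤ ((m : ℤ) - 1) * K →
      {jk : ℤ × ℤ | pos13 K r t L m s jk.1 jk.2}.ncard = r * t + L :=
  stmt13_general K r t L m hr ht hm hK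
end
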